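/- arXiv:1211.4081 — 5 statements merged into one kernel-verified Lean document; each statement's English description precedes it below -/
import Mathlib

section
/- Let (Ω, μ) be a probability space, let W : Ω → 𝒲, Z : Ω → 𝒵, L : Ω → ℒ, V : Ω → 𝒱 be measurable random variables taking values in finite types (with measurable singletons), and suppose there is a function f : 𝒲 × 𝒵 × ℒ → 𝒱 such that V = f(W, Z, L) holds μ-almost surely. Then I[W : Z] ≤ log(card 𝒵) + log(card ℒ) − H[V | W]. In particular, if log(card 𝒵) + log(card ℒ) ≤ H[V | W] + δ for some δ ≥ 0, then I[W : Z] ≤ δ. -/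
open MeasureTheory ProbabilityTheory Real

namespace WiretapEquiv

variable {Ω : Type*} [MeasurableSpace Ω]

/-- Shannon entropy (with natural logarithm) of a measure on a finite type,
as in Mathlib's `ProbabilityTheory.measureEntropy` specialized to finite types. -/
noncomputable def measureEntropy {α : Type*} [MeasurableSpace α] [Fintype α]
    (μ : Measure α) : ℝ :=
  ∑ a : α, Real.negMulLog (μ {a}).toReal

/-- Shannon entropy `H[X]` of a random variable. -/
noncomputable def entropy {α : Type*} [MeasurableSpace α] [Fintype α]
    (X : Ω → α) (μ : Measure Ω) : ℝ :=
  measureEntropy (μ.map X)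

/-- Conditional entropy `H[X | Y] = H[⟨X, Y⟩] - H[Y]`. -/
noncomputable def condEntropy {α β : Type*} [MeasurableSpace α] [Fintype α]
    [MeasurableSpace β] [Fintype β] (X : Ω → α) (Y : Ω → β) (μ : Measure Ω) : ℝ :=
  entropy (fun ω => (X ω, Y ω)) μ - entropy Y μ

/-- Mutual information `I[X : Y] = H[X] + H[Y] - H[⟨X, Y⟩]`. -/
noncomputable def mutualInfo {α β : Type*} [MeasurableSpace α] [Fintype α]
    [MeasurableSpace β] [Fintype β] (X : Ω → α) (Y : Ω → β) (μ : Measure Ω) : ℝ :=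
  entropy X μ + entropy Y μ - entropy (fun ω => (X ω, Y ω)) μ

/-! ### Auxiliary lemmas -/

/-- Subadditivity of `negMulLog` over a finite sum of nonnegative reals. -/
lemma negMulLog_sum_le {ι : Type*} (s : Finset ι) (x : ι → ℝ) (hx : ∀ i ∈ s, 0 ≤ x i) :
    Real.negMulLog (∑ i ∈ s, x i) ≤ ∑ i ∈ s, Real.negMulLog (x i) := by
  set S := ∑ i ∈ s, x i with hS
  have h1 : Real.negMulLog S = ∑ i ∈ s, (-(x i) * Real.log S) := by
    rw [Real.negMulLog, ← Finset.sum_mul, ← Finset.sum_neg_distrib]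
  rw [h1]
  refine Finset.sum_le_sum fun i hi => ?_
  rcases eq_or_lt_of_le (hx i hi) with h | h
  · simp [← h]
  · have hxiS : x i ≤ S := Finset.single_le_sum hx hi
    have : Real.log (x i) ≤ Real.log S := Real.log_le_log h hxiS
    rw [Real.negMulLog, neg_mul, neg_mul]
    nlinarith
  
/-- Gibbs' inequality for finitely supported distributions. -/
lemma gibbs {ι : Type*} [Fintype ι] (p q : ι → ℝ) (hp : ∀ a, 0 ≤ p a) (hq : ∀ a, 0 ≤ q a)
    (h0 : ∀ a, p a ≠ 0 → q a ≠ 0) (hq1 : ∑ a, q a ≤ 1) (hp1 : ∑ a, p a = 1) :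
    ∑ a, p a * Real.log (q a) ≤ ∑ a, p a * Real.log (p a) := by
  have key : ∀ a : ι, p a * Real.log (q a) - p a * Real.log (p a) ≤ q a - p a := by
    intro a
    rcases eq_or_lt_of_le (hp a) with h | h
    · simp [← h, hq a]
    · have hqa : 0 < q a := lt_of_le_of_ne (hq a) (Ne.symm (h0 a h.ne'))
      have hlog := Real.log_le_sub_one_of_pos (div_pos hqa h)
      rw [Real.log_div hqa.ne' h.ne'] at hlog
      have h2 : p a * (Real.log (q a) - Real.log (p a)) ≤ q a - p a := by
        calc p a * (Real.log (q a) - Real.log (p a))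
            ≤ p a * (q a / p a - 1) := mul_le_mul_of_nonneg_left hlog h.le
          _ = q a - p a := by field_simp
      rw [mul_sub] at h2
      linarith
  have hsum := Finset.sum_le_sum (fun a (_ : a ∈ Finset.univ) => key a)
  rw [Finset.sum_sub_distrib, Finset.sum_sub_distrib, hp1] at hsum
  linarith

lemma sum_toReal_singleton {α : Type*} [MeasurableSpace α] [Fintype α]
    [MeasurableSingletonClass α] (ν : Measure α) [IsProbabilityMeasure ν] :
    ∑ a : α, (ν {a}).toReal = 1 := by
  classical
  have h : ∑ a : α, ν {a} = ν Set.univ := by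
    have hu : (Set.univ : Set α) = ⋃ a ∈ (Finset.univ : Finset α), {a} := by
      ext x; simp
    rw [hu, measure_biUnion_finset ?_ (fun a _ => measurableSet_singleton a)]
    intro a _ b _ hab
    exact Set.disjoint_singleton.mpr hab
  rw [← ENNReal.toReal_sum (fun a _ => measure_ne_top ν {a})] at *
  rw [h, measure_univ, ENNReal.toReal_one]

lemma measureEntropy_eq_neg_sum {α : Type*} [MeasurableSpace α] [Fintype α]
    (ν : Measure α) :
    measureEntropy ν = -∑ a : α, (ν {a}).toReal * Real.log (ν {a}).toReal := by
  rw [measureEntropy, ← Finset.sum_neg_distrib]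
  exact Finset.sum_congr rfl fun a _ => by rw [Real.negMulLog, neg_mul]

lemma measureEntropy_le_log_card {α : Type*} [MeasurableSpace α] [Fintype α]
    [MeasurableSingletonClass α] (ν : Measure α) [IsProbabilityMeasure ν] :
    measureEntropy ν ≤ Real.log (Fintype.card α) := by
  have hsum : ∑ a : α, (ν {a}).toReal = 1 := sum_toReal_singleton ν
  have hne : Nonempty α := by
    by_contra h
    rw [not_nonempty_iff] at h
    simp [Finset.univ_eq_empty] at hsum
  have hcard : (0 : ℝ) < Fintype.card α := by
    exact_mod_cast Fintype.card_pos
  have hg := gibbs (fun a => (ν {a}).toReal) (fun _ => (Fintype.card α : ℝ)⁻¹)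
    (fun a => ENNReal.toReal_nonneg) (fun _ => by positivity)
    (fun a _ => by positivity)
    (by rw [Finset.sum_const, nsmul_eq_mul, Finset.card_univ, mul_inv_cancel₀ hcard.ne'])
    hsum
  rw [← Finset.sum_mul, hsum, one_mul, Real.log_inv] at hg
  rw [measureEntropy_eq_neg_sum]
  linarith

lemma measure_toReal_eq_sum {α : Type*} [MeasurableSpace α]
    [MeasurableSingletonClass α] (ν : Measure α) [IsFiniteMeasure ν] (t : Finset α) :
    (ν (t : Set α)).toReal = ∑ a ∈ t, (ν {a}).toReal := by
  have hs : (t : Set α) = ⋃ a ∈ t, {a} := by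
    ext x; simp
  rw [hs, measure_biUnion_finset ?_ (fun a _ => measurableSet_singleton a),
    ENNReal.toReal_sum (fun a _ => measure_ne_top ν {a})]
  intro a _ b _ hab
  exact Set.disjoint_singleton.mpr hab

lemma measureEntropy_map_le {α β : Type*} [MeasurableSpace α] [Fintype α]
    [MeasurableSingletonClass α] [MeasurableSpace β] [Fintype β]
    [MeasurableSingletonClass β] (ν : Measure α) [IsFiniteMeasure ν] (g : α → β) :
    measureEntropy (ν.map g) ≤ measureEntropy ν := by
  classical
  have hg : Measurable g := Measurable.of_discrete
  have hmap : ∀ b : β, ((ν.map g) {b}).toReal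
      = ∑ a ∈ Finset.univ.filter (fun a => g a = b), (ν {a}).toReal := by
    intro b
    have hpre : g ⁻¹' {b} = ((Finset.univ.filter (fun a => g a = b) : Finset α) : Set α) := by
      ext a; simp
    rw [Measure.map_apply hg (measurableSet_singleton b), hpre, measure_toReal_eq_sum]
  calc measureEntropy (ν.map g)
      = ∑ b : β, Real.negMulLog (∑ a ∈ Finset.univ.filter (fun a => g a = b),
          (ν {a}).toReal) := by
        exact Finset.sum_congr rfl fun b _ => by rw [hmap]
    _ ≤ ∑ b : β, ∑ a ∈ Finset.univ.filter (fun a => g a = b),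
          Real.negMulLog (ν {a}).toReal :=
        Finset.sum_le_sum fun b _ => negMulLog_sum_le _ _
          (fun a _ => ENNReal.toReal_nonneg)
    _ = ∑ a : α, Real.negMulLog (ν {a}).toReal :=
        Finset.sum_fiberwise Finset.univ g (fun a => Real.negMulLog (ν {a}).toReal)
    _ = measureEntropy ν := rfl

lemma entropy_comp_le {α β : Type*} [MeasurableSpace α] [Fintype α]
    [MeasurableSingletonClass α] [MeasurableSpace β] [Fintype β]
    [MeasurableSingletonClass β] (μ : Measure Ω) [IsProbabilityMeasure μ]
    (X : Ω → α) (hX : Measurable X) (g : α → β) :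
    entropy (fun ω => g (X ω)) μ ≤ entropy X μ := by
  have hg : Measurable g := Measurable.of_discrete
  haveI : IsProbabilityMeasure (μ.map X) := Measure.isProbabilityMeasure_map hX.aemeasurable
  have hmm : μ.map (fun ω => g (X ω)) = (μ.map X).map g := (Measure.map_map hg hX).symm
  unfold entropy
  rw [hmm]
  exact measureEntropy_map_le (μ.map X) g

lemma entropy_le_log_card {α : Type*} [MeasurableSpace α] [Fintype α]
    [MeasurableSingletonClass α] (μ : Measure Ω) [IsProbabilityMeasure μ]
    (X : Ω → α) (hX : Measurable X) :
    entropy X μ ≤ Real.log (Fintype.card α) := by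
  have : IsProbabilityMeasure (μ.map X) := Measure.isProbabilityMeasure_map hX.aemeasurable
  exact measureEntropy_le_log_card (μ.map X)

/-- Subadditivity of entropy: `H[⟨X, Y⟩] ≤ H[X] + H[Y]`. -/
lemma entropy_pair_le {α β : Type*} [MeasurableSpace α] [Fintype α]
    [MeasurableSingletonClass α] [MeasurableSpace β] [Fintype β]
    [MeasurableSingletonClass β] (μ : Measure Ω) [IsProbabilityMeasure μ]
    (X : Ω → α) (Y : Ω → β) (hX : Measurable X) (hY : Measurable Y) :
    entropy (fun ω => (X ω, Y ω)) μ ≤ entropy X μ + entropy Y μ := by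
  classical
  have hXY : Measurable (fun ω => (X ω, Y ω)) := hX.prodMk hY
  have hPM : IsProbabilityMeasure (μ.map (fun ω => (X ω, Y ω))) :=
    Measure.isProbabilityMeasure_map hXY.aemeasurable
  set p : α × β → ℝ := fun c => ((μ.map (fun ω => (X ω, Y ω))) {c}).toReal with hp_def
  set pA : α → ℝ := fun a => ((μ.map X) {a}).toReal with hpA_def
  set pB : β → ℝ := fun b => ((μ.map Y) {b}).toReal with hpB_def
  have hp : ∀ c, 0 ≤ p c := fun c => ENNReal.toReal_nonneg
  have hp1 : ∑ c : α × β, p c = 1 := sum_toReal_singleton _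
  -- marginals
  have hpA : ∀ a, pA a = ∑ b : β, p (a, b) := by
    intro a
    have h1 : X ⁻¹' {a}
        = (fun ω => (X ω, Y ω)) ⁻¹' (⋃ b ∈ (Finset.univ : Finset β), ({(a, b)} : Set (α × β))) := by
      ext ω; simp [Prod.ext_iff, eq_comm]
    simp only [hpA_def]
    rw [Measure.map_apply hX (measurableSet_singleton a), h1, Set.preimage_iUnion₂]
    rw [measure_biUnion_finset ?_ (fun b _ => hXY (measurableSet_singleton _)),
      ENNReal.toReal_sum (fun b _ => measure_ne_top μ _)]
    · refine Finset.sum_congr rfl fun b _ => ?_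
      simp only [hp_def]
      rw [Measure.map_apply hXY (measurableSet_singleton _)]
    · intro b _ b' _ hbb'
      refine Disjoint.preimage _ (Set.disjoint_singleton.mpr ?_)
      simp [hbb']
  have hpB : ∀ b, pB b = ∑ a : α, p (a, b) := by
    intro b
    have h1 : Y ⁻¹' {b}
        = (fun ω => (X ω, Y ω)) ⁻¹' (⋃ a ∈ (Finset.univ : Finset α), ({(a, b)} : Set (α × β))) := by
      ext ω; simp [Prod.ext_iff, eq_comm]
    simp only [hpB_def]
    rw [Measure.map_apply hY (measurableSet_singleton b), h1, Set.preimage_iUnion₂]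
    rw [measure_biUnion_finset ?_ (fun a _ => hXY (measurableSet_singleton _)),
      ENNReal.toReal_sum (fun a _ => measure_ne_top μ _)]
    · refine Finset.sum_congr rfl fun a _ => ?_
      simp only [hp_def]; rw [ Measure.map_apply hXY (measurableSet_singleton _)]
    · intro a _ a' _ haa'
      refine Disjoint.preimage _ (Set.disjoint_singleton.mpr ?_)
      simp [haa']
  have hpA0 : ∀ a, 0 ≤ pA a := fun a => ENNReal.toReal_nonneg
  have hpB0 : ∀ b, 0 ≤ pB b := fun b => ENNReal.toReal_nonneg
  haveI : IsProbabilityMeasure (μ.map X) := Measure.isProbabilityMeasure_map hX.aemeasurable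
  haveI : IsProbabilityMeasure (μ.map Y) := Measure.isProbabilityMeasure_map hY.aemeasurable
  have hpA1 : ∑ a : α, pA a = 1 := sum_toReal_singleton _
  have hpB1 : ∑ b : β, pB b = 1 := sum_toReal_singleton _
  have hle_pA : ∀ c : α × β, p c ≤ pA c.1 := by
    intro c
    rw [hpA c.1]
    exact Finset.single_le_sum (fun b _ => hp (c.1, b)) (Finset.mem_univ c.2)
  have hle_pB : ∀ c : α × β, p c ≤ pB c.2 := by
    intro c
    rw [hpB c.2]
    exact Finset.single_le_sum (fun a _ => hp (a, c.2)) (Finset.mem_univ c.1)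
  -- Gibbs
  have hg := gibbs p (fun c => pA c.1 * pB c.2) hp
    (fun c => mul_nonneg (hpA0 c.1) (hpB0 c.2))
    (fun c hc => by
      have h1 : 0 < p c := lt_of_le_of_ne (hp c) (Ne.symm hc)
      have h2 : 0 < pA c.1 := lt_of_lt_of_le h1 (hle_pA c)
      have h3 : 0 < pB c.2 := lt_of_lt_of_le h1 (hle_pB c)
      positivity)
    (le_of_eq (by
      rw [Fintype.sum_prod_type]
      simp_rw [← Finset.mul_sum, ← Finset.sum_mul]
      rw [hpA1, hpB1, one_mul]))
    hp1
  -- split log of product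
  have hsplit : ∑ c : α × β, p c * Real.log (pA c.1 * pB c.2)
      = ∑ c : α × β, p c * Real.log (pA c.1) + ∑ c : α × β, p c * Real.log (pB c.2) := by
    rw [← Finset.sum_add_distrib]
    refine Finset.sum_congr rfl fun c _ => ?_
    rcases eq_or_ne (p c) 0 with h | h
    · simp [h]
    · have h1 : 0 < p c := lt_of_le_of_ne (hp c) (Ne.symm h)
      have h2 : 0 < pA c.1 := lt_of_lt_of_le h1 (hle_pA c)
      have h3 : 0 < pB c.2 := lt_of_lt_of_le h1 (hle_pB c)
      rw [Real.log_mul h2.ne' h3.ne', mul_add]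
  have hA : ∑ c : α × β, p c * Real.log (pA c.1) = ∑ a : α, pA a * Real.log (pA a) := by
    rw [Fintype.sum_prod_type]
    refine Finset.sum_congr rfl fun a _ => ?_
    calc ∑ b : β, p (a, b) * Real.log (pA (a, b).1)
        = (∑ b : β, p (a, b)) * Real.log (pA a) := by
          rw [Finset.sum_mul]
      _ = pA a * Real.log (pA a) := by rw [← hpA a]
  have hB : ∑ c : α × β, p c * Real.log (pB c.2) = ∑ b : β, pB b * Real.log (pB b) := by
    rw [Fintype.sum_prod_type_right]
    refine Finset.sum_congr rfl fun b _ => ?_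
    calc ∑ a : α, p (a, b) * Real.log (pB (a, b).2)
        = (∑ a : α, p (a, b)) * Real.log (pB b) := by
          rw [Finset.sum_mul]
      _ = pB b * Real.log (pB b) := by rw [← hpB b]
  rw [hsplit, hA, hB] at hg
  have e1 : entropy (fun ω => (X ω, Y ω)) μ = -∑ c : α × β, p c * Real.log (p c) :=
    measureEntropy_eq_neg_sum _
  have e2 : entropy X μ = -∑ a : α, pA a * Real.log (pA a) := measureEntropy_eq_neg_sum _
  have e3 : entropy Y μ = -∑ b : β, pB b * Real.log (pB b) := measureEntropy_eq_neg_sum _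
  rw [e1, e2, e3]
  linarith

/-- If an auxiliary receiver can decode `V` from `(W, Z, L)` almost surely,
then `I[W : Z] ≤ log |𝒵| + log |ℒ| − H[V | W]`; in particular, if the total capacity
`log |𝒵| + log |ℒ|` is within `δ` of `H[V | W]`, then `I[W : Z] ≤ δ`. -/
theorem mutualInfo_le_of_decodable
    {𝒲 𝒵 ℒ 𝒱 : Type*}
    [MeasurableSpace 𝒲] [Fintype 𝒲] [MeasurableSingletonClass 𝒲]
    [MeasurableSpace 𝒵] [Fintype 𝒵] [MeasurableSingletonClass 𝒵]
    [MeasurableSpace ℒ] [Fintype ℒ] [MeasurableSingletonClass ℒ]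
    [MeasurableSpace 𝒱] [Fintype 𝒱] [MeasurableSingletonClass 𝒱]
    (μ : Measure Ω) [IsProbabilityMeasure μ]
    (W : Ω → 𝒲) (Z : Ω → 𝒵) (L : Ω → ℒ) (V : Ω → 𝒱)
    (hW : Measurable W) (hZ : Measurable Z) (hL : Measurable L) (hV : Measurable V)
    (f : 𝒲 × 𝒵 × ℒ → 𝒱)
    (hdec : ∀ᵐ ω ∂μ, V ω = f (W ω, Z ω, L ω)) :
    mutualInfo W Z μ ≤
        Real.log (Fintype.card 𝒵) + Real.log (Fintype.card ℒ) - condEntropy V W μ ∧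
      ∀ δ : ℝ, 0 ≤ δ →
        Real.log (Fintype.card 𝒵) + Real.log (Fintype.card ℒ) ≤ condEntropy V W μ + δ →
        mutualInfo W Z μ ≤ δ := by
  have hWZL : Measurable (fun ω => (W ω, Z ω, L ω)) := hW.prodMk (hZ.prodMk hL)
  have hWZ : Measurable (fun ω => (W ω, Z ω)) := hW.prodMk hZ
  have hWZL' : Measurable (fun ω => ((W ω, Z ω), L ω)) := hWZ.prodMk hL
  -- step 1: H[(V,W)] = H[g ∘ (W,Z,L)] where g t = (f t, t.1)
  have h1 : entropy (fun ω => (V ω, W ω)) μ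
      = entropy (fun ω => (f (W ω, Z ω, L ω), W ω)) μ := by
    unfold entropy
    rw [Measure.map_congr (hdec.mono fun ω h => by rw [h])]
  have h2 : entropy (fun ω => (f (W ω, Z ω, L ω), W ω)) μ
      ≤ entropy (fun ω => (W ω, Z ω, L ω)) μ :=
    entropy_comp_le μ _ hWZL (fun t => (f t, t.1))
  have h3 : entropy (fun ω => (W ω, Z ω, L ω)) μ
      ≤ entropy (fun ω => ((W ω, Z ω), L ω)) μ :=
    entropy_comp_le μ _ hWZL' (fun t => (t.1.1, t.1.2, t.2))
  have h4 : entropy (fun ω => ((W ω, Z ω), L ω)) μ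
      ≤ entropy (fun ω => (W ω, Z ω)) μ + entropy L μ :=
    entropy_pair_le μ _ L hWZ hL
  have h5 : entropy L μ ≤ Real.log (Fintype.card ℒ) := entropy_le_log_card μ L hL
  have h6 : entropy Z μ ≤ Real.log (Fintype.card 𝒵) := entropy_le_log_card μ Z hZ
  have hmain : mutualInfo W Z μ ≤
      Real.log (Fintype.card 𝒵) + Real.log (Fintype.card ℒ) - condEntropy V W μ := by
    unfold mutualInfo condEntropy
    linarith
  exact ⟨hmain, fun δ _ hcap => by linarith⟩

end WiretapEquiv
end

section
/- Let (Ω, μ) be a probability space, X : Ω → α a measurable random variable into a finite type α with measurable singletons, ε ∈ [0,1], and let B1, B2 : Ω → Bool be measurable with μ {ω | B1 ω = true} = μ {ω | B2 ω = true} = ε such that X, B1, B2 are mutually independent. Let Z1, Z2 be the corresponding erasures of X (Zi ω = if Bi ω then none else some (X ω)). Then H[X | ⟨Z1, Z2⟩] = ε² · H[X] and I[X : ⟨Z1, Z2⟩] = (1 − ε²) · H[X]. In particular, for ε = 1/2, an eavesdropper observing both independent erasures of the same input obtains I[X : ⟨Z1, Z2⟩] = (3/4) · H[X] of the transmitted information.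 -/
open MeasureTheory ProbabilityTheory Real

namespace WiretapEquiv

variable {Ω : Type*} [MeasurableSpace Ω]

/-- `Z` is an `ε`-erasure of `X` with erasure indicator `B`: `B` is measurable,
independent of `X`, has `μ {B = true} = ε`, and
`Z ω = if B ω then none else some (X ω)`. -/
def IsErasure {α : Type*} [MeasurableSpace α] (μ : Measure Ω) (ε : ℝ)
    (X : Ω → α) (B : Ω → Bool) (Z : Ω → Option α) : Prop :=
  Measurable B ∧ IndepFun X B μ ∧ μ {ω | B ω = true} = ENNReal.ofReal ε ∧
    ∀ ω, Z ω = if B ω then none else some (X ω)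

/-- `X`, `B1`, `B2` are mutually independent: `B1` and `B2` are independent of each
other, and `X` is independent of the pair `⟨B1, B2⟩` (this is equivalent to the joint
distribution factorizing as the product of the three marginals). -/
def MutuallyIndep {α : Type*} [MeasurableSpace α] (μ : Measure Ω)
    (X : Ω → α) (B1 B2 : Ω → Bool) : Prop :=
  IndepFun B1 B2 μ ∧ IndepFun X (fun ω => (B1 ω, B2 ω)) μ

/-- If `Z1, Z2` are independent `ε`-erasures of the same input `X`
(with `X, B1, B2` mutually independent), then `H[X | ⟨Z1, Z2⟩] = ε² · H[X]` and
`I[X : ⟨Z1, Z2⟩] = (1 − ε²) · H[X]`; in particular for `ε = 1/2` the eavesdropper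
observing both erasures obtains `I[X : ⟨Z1, Z2⟩] = (3/4) · H[X]`. -/
theorem condEntropy_and_mutualInfo_of_two_erasures
    {α : Type*} [MeasurableSpace α] [Fintype α] [MeasurableSingletonClass α]
    [MeasurableSpace (Option α)] [MeasurableSingletonClass (Option α)]
    (μ : Measure Ω) [IsProbabilityMeasure μ]
    (X : Ω → α) (hX : Measurable X)
    (ε : ℝ) (hε : ε ∈ Set.Icc (0 : ℝ) 1)
    (B1 B2 : Ω → Bool) (Z1 Z2 : Ω → Option α)
    (hB1 : μ {ω | B1 ω = true} = ENNReal.ofReal ε)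
    (hB2 : μ {ω | B2 ω = true} = ENNReal.ofReal ε)
    (hmB1 : Measurable B1) (hmB2 : Measurable B2)
    (hindep : MutuallyIndep μ X B1 B2)
    (hZ1 : ∀ ω, Z1 ω = if B1 ω then none else some (X ω))
    (hZ2 : ∀ ω, Z2 ω = if B2 ω then none else some (X ω)) :
    condEntropy X (fun ω => (Z1 ω, Z2 ω)) μ = ε ^ 2 * entropy X μ ∧
      mutualInfo X (fun ω => (Z1 ω, Z2 ω)) μ = (1 - ε ^ 2) * entropy X μ ∧
      (ε = 1 / 2 → mutualInfo X (fun ω => (Z1 ω, Z2 ω)) μ = (3 / 4) * entropy X μ) := by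
  classical
  obtain ⟨hε0, hε1⟩ := hε
  obtain ⟨hB12, hXB⟩ := hindep
  -- probabilities of the Bernoulli variables
  set Q : Bool → ENNReal := fun b => if b then ENNReal.ofReal ε else ENNReal.ofReal (1 - ε)
    with hQdef
  set q : Bool → ℝ := fun b => if b then ε else 1 - ε with hqdef
  have hQtoReal : ∀ b, (Q b).toReal = q b := by
    intro b; cases b <;> simp [hQdef, hqdef, ENNReal.toReal_ofReal, hε0, sub_nonneg.2 hε1]
  have hQne : ∀ b, Q b ≠ ⊤ := by
    intro b; cases b <;> simp [hQdef]
  have hB1m : ∀ b, μ (B1 ⁻¹' {b}) = Q b := by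
    intro b
    have ht : μ (B1 ⁻¹' {true}) = ENNReal.ofReal ε := hB1
    cases b
    · have hc : B1 ⁻¹' {false} = (B1 ⁻¹' {true})ᶜ := by
        ext ω; cases h : B1 ω <;> simp [h]
      rw [hc, measure_compl (hmB1 (measurableSet_singleton true)) (measure_ne_top μ _), ht,
        measure_univ, hQdef]
      simp [ENNReal.ofReal_sub, hε0]
    · exact ht
  have hB2m : ∀ b, μ (B2 ⁻¹' {b}) = Q b := by
    intro b
    have ht : μ (B2 ⁻¹' {true}) = ENNReal.ofReal ε := hB2
    cases b
    · have hc : B2 ⁻¹' {false} = (B2 ⁻¹' {true})ᶜ := by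
        ext ω; cases h : B2 ω <;> simp [h]
      rw [hc, measure_compl (hmB2 (measurableSet_singleton true)) (measure_ne_top μ _), ht,
        measure_univ, hQdef]
      simp [ENNReal.ofReal_sub, hε0]
    · exact ht
  have keyB : ∀ b1 b2, μ {ω | B1 ω = b1 ∧ B2 ω = b2} = Q b1 * Q b2 := by
    intro b1 b2
    have h := hB12.measure_inter_preimage_eq_mul {b1} {b2}
      (measurableSet_singleton b1) (measurableSet_singleton b2)
    have hs : {ω | B1 ω = b1 ∧ B2 ω = b2} = B1 ⁻¹' {b1} ∩ B2 ⁻¹' {b2} := by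
      ext ω
      simp only [Set.mem_setOf_eq, Set.mem_inter_iff, Set.mem_preimage, Set.mem_singleton_iff]
    rw [hs, h, hB1m, hB2m]
  have key : ∀ (a : α) (b1 b2 : Bool),
      μ {ω | X ω = a ∧ B1 ω = b1 ∧ B2 ω = b2} = μ (X ⁻¹' {a}) * (Q b1 * Q b2) := by
    intro a b1 b2
    have h := hXB.measure_inter_preimage_eq_mul {a} {(b1, b2)}
      (measurableSet_singleton a) (measurableSet_singleton (b1, b2))
    have hs : {ω | X ω = a ∧ B1 ω = b1 ∧ B2 ω = b2}
        = X ⁻¹' {a} ∩ (fun ω => (B1 ω, B2 ω)) ⁻¹' {(b1, b2)} := by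
      ext ω
      simp only [Set.mem_setOf_eq, Set.mem_inter_iff, Set.mem_preimage, Set.mem_singleton_iff,
        Prod.mk.injEq]
    have hp : (fun ω => (B1 ω, B2 ω)) ⁻¹' {(b1, b2)} = {ω | B1 ω = b1 ∧ B2 ω = b2} := by
      ext ω
      simp only [Set.mem_setOf_eq, Set.mem_preimage, Set.mem_singleton_iff, Prod.mk.injEq]
    rw [hs, h, hp, keyB]
  -- measurability
  have hZ1f : Z1 = fun ω => if B1 ω = true then none else some (X ω) := by
    funext ω; simpa using hZ1 ω
  have hZ2f : Z2 = fun ω => if B2 ω = true then none else some (X ω) := by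
    funext ω; simpa using hZ2 ω
  have hsome : Measurable (some : α → Option α) := measurable_of_countable _
  have hmZ1 : Measurable Z1 := by
    rw [hZ1f]
    exact Measurable.ite (hmB1 (measurableSet_singleton true)) measurable_const (hsome.comp hX)
  have hmZ2 : Measurable Z2 := by
    rw [hZ2f]
    exact Measurable.ite (hmB2 (measurableSet_singleton true)) measurable_const (hsome.comp hX)
  have hmZ : Measurable (fun ω => (Z1 ω, Z2 ω)) := hmZ1.prodMk hmZ2
  have hmW : Measurable (fun ω => (X ω, (Z1 ω, Z2 ω))) := hX.prodMk hmZ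
  -- real-valued pointwise probabilities
  set P : α → ℝ := fun a => (μ (X ⁻¹' {a})).toReal with hPdef
  have hPsum : ∑ a : α, P a = 1 := by
    have h1 : ∑ a : α, μ (X ⁻¹' {a}) = 1 := by
      have := sum_measure_preimage_singleton (f := X) (μ := μ) Finset.univ
        (fun a _ => hX (measurableSet_singleton a))
      simpa using this
    have h2 : ∑ a : α, P a = (∑ a : α, μ (X ⁻¹' {a})).toReal := by
      rw [ENNReal.toReal_sum]
      intro a _; exact measure_ne_top μ _
    rw [h2, h1]; simp
  have hkeyR : ∀ (a : α) (b1 b2 : Bool),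
      (μ {ω | X ω = a ∧ B1 ω = b1 ∧ B2 ω = b2}).toReal = P a * (q b1 * q b2) := by
    intro a b1 b2
    rw [key, ENNReal.toReal_mul, ENNReal.toReal_mul, hQtoReal, hQtoReal]
  have hkeyB : ∀ b1 b2, (μ {ω | B1 ω = b1 ∧ B2 ω = b2}).toReal = q b1 * q b2 := by
    intro b1 b2
    rw [keyB, ENNReal.toReal_mul, hQtoReal, hQtoReal]
  -- entropy of X
  have hHX : entropy X μ = ∑ a : α, negMulLog (P a) := by
    unfold entropy measureEntropy
    refine Finset.sum_congr rfl fun a _ => ?_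
    rw [Measure.map_apply hX (measurableSet_singleton a)]
  -- value function for (Z1, Z2)
  have hZval : ∀ z : Option α × Option α,
      ((μ.map (fun ω => (Z1 ω, Z2 ω))) {z}).toReal =
        match z with
        | (none, none) => q true * q true
        | (none, some a) => P a * (q true * q false)
        | (some a, none) => P a * (q false * q true)
        | (some a, some a') => if a' = a then P a * (q false * q false) else 0 := by
    rintro ⟨z1, z2⟩
    rw [Measure.map_apply hmZ (measurableSet_singleton _)]
    match z1, z2 with
    | none, none =>
      have hs : (fun ω => (Z1 ω, Z2 ω)) ⁻¹' {((none : Option α), (none : Option α))}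
          = {ω | B1 ω = true ∧ B2 ω = true} := by
        ext ω
        simp only [Set.mem_preimage, Set.mem_singleton_iff, Prod.ext_iff, hZ1, hZ2, Set.mem_setOf_eq]
        cases h1 : B1 ω <;> cases h2 : B2 ω <;> simp
      rw [hs]; exact hkeyB true true
    | none, some a =>
      have hs : (fun ω => (Z1 ω, Z2 ω)) ⁻¹' {((none : Option α), some a)}
          = {ω | X ω = a ∧ B1 ω = true ∧ B2 ω = false} := by
        ext ω
        simp only [Set.mem_preimage, Set.mem_singleton_iff, Prod.ext_iff, hZ1, hZ2, Set.mem_setOf_eq]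
        cases h1 : B1 ω <;> cases h2 : B2 ω <;> simp [and_comm]
      rw [hs]; exact hkeyR a true false
    | some a, none =>
      have hs : (fun ω => (Z1 ω, Z2 ω)) ⁻¹' {(some a, (none : Option α))}
          = {ω | X ω = a ∧ B1 ω = false ∧ B2 ω = true} := by
        ext ω
        simp only [Set.mem_preimage, Set.mem_singleton_iff, Prod.ext_iff, hZ1, hZ2, Set.mem_setOf_eq]
        cases h1 : B1 ω <;> cases h2 : B2 ω <;> simp [and_comm]
      rw [hs]; exact hkeyR a false true
    | some a, some a' =>
      by_cases h : a' = a
      · subst h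
        have hs : (fun ω => (Z1 ω, Z2 ω)) ⁻¹' {(some a', some a')}
            = {ω | X ω = a' ∧ B1 ω = false ∧ B2 ω = false} := by
          ext ω
          simp only [Set.mem_preimage, Set.mem_singleton_iff, Prod.ext_iff, hZ1, hZ2,
            Set.mem_setOf_eq]
          cases h1 : B1 ω <;> cases h2 : B2 ω <;> simp <;> tauto
        rw [hs]; simpa using hkeyR a' false false
      · have hs : (fun ω => (Z1 ω, Z2 ω)) ⁻¹' {(some a, some a')} = (∅ : Set Ω) := by
          ext ω
          simp only [Set.mem_preimage, Set.mem_singleton_iff, Prod.ext_iff, hZ1, hZ2,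
            Set.mem_empty_iff_false, iff_false]
          cases h1 : B1 ω <;> cases h2 : B2 ω <;> simp
          rintro rfl rfl
          exact h rfl
        rw [hs]; simp [h]
  -- value function for (X, (Z1, Z2))
  have hWval : ∀ w : α × Option α × Option α,
      ((μ.map (fun ω => (X ω, (Z1 ω, Z2 ω)))) {w}).toReal =
        match w with
        | (a, (none, none)) => P a * (q true * q true)
        | (a, (none, some a')) => if a' = a then P a * (q true * q false) else 0
        | (a, (some a', none)) => if a' = a then P a * (q false * q true) else 0
        | (a, (some a', some a'')) =>
            if a' = a ∧ a'' = a then P a * (q false * q false) else 0 := by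
    rintro ⟨a, z1, z2⟩
    rw [Measure.map_apply hmW (measurableSet_singleton _)]
    match z1, z2 with
    | none, none =>
      have hs : (fun ω => (X ω, (Z1 ω, Z2 ω))) ⁻¹' {(a, ((none : Option α), (none : Option α)))}
          = {ω | X ω = a ∧ B1 ω = true ∧ B2 ω = true} := by
        ext ω
        simp only [Set.mem_preimage, Set.mem_singleton_iff, Prod.ext_iff, hZ1, hZ2, Set.mem_setOf_eq]
        cases h1 : B1 ω <;> cases h2 : B2 ω <;> simp
      rw [hs]; exact hkeyR a true true
    | none, some a' =>
      by_cases h : a' = a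
      · subst h
        have hs : (fun ω => (X ω, (Z1 ω, Z2 ω))) ⁻¹' {(a', ((none : Option α), some a'))}
            = {ω | X ω = a' ∧ B1 ω = true ∧ B2 ω = false} := by
          ext ω
          simp only [Set.mem_preimage, Set.mem_singleton_iff, Prod.ext_iff, hZ1, hZ2,
            Set.mem_setOf_eq]
          cases h1 : B1 ω <;> cases h2 : B2 ω <;> simp <;> tauto
        rw [hs]; simpa using hkeyR a' true false
      · have hs : (fun ω => (X ω, (Z1 ω, Z2 ω))) ⁻¹' {(a, ((none : Option α), some a'))}
            = (∅ : Set Ω) := by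
          ext ω
          simp only [Set.mem_preimage, Set.mem_singleton_iff, Prod.ext_iff, hZ1, hZ2,
            Set.mem_empty_iff_false, iff_false]
          cases h1 : B1 ω <;> cases h2 : B2 ω <;> simp
          rintro rfl rfl
          exact h rfl
        rw [hs]; simp [h]
    | some a', none =>
      by_cases h : a' = a
      · subst h
        have hs : (fun ω => (X ω, (Z1 ω, Z2 ω))) ⁻¹' {(a', (some a', (none : Option α)))}
            = {ω | X ω = a' ∧ B1 ω = false ∧ B2 ω = true} := by
          ext ω
          simp only [Set.mem_preimage, Set.mem_singleton_iff, Prod.ext_iff, hZ1, hZ2,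
            Set.mem_setOf_eq]
          cases h1 : B1 ω <;> cases h2 : B2 ω <;> simp <;> tauto
        rw [hs]; simpa using hkeyR a' false true
      · have hs : (fun ω => (X ω, (Z1 ω, Z2 ω))) ⁻¹' {(a, (some a', (none : Option α)))}
            = (∅ : Set Ω) := by
          ext ω
          simp only [Set.mem_preimage, Set.mem_singleton_iff, Prod.ext_iff, hZ1, hZ2,
            Set.mem_empty_iff_false, iff_false]
          cases h1 : B1 ω <;> cases h2 : B2 ω <;> simp
          rintro rfl rfl
          exact h rfl
        rw [hs]; simp [h]
    | some a', some a'' =>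
      by_cases h : a' = a ∧ a'' = a
      · obtain ⟨ha1, ha2⟩ := h
        have hs : (fun ω => (X ω, (Z1 ω, Z2 ω))) ⁻¹' {(a, (some a', some a''))}
            = {ω | X ω = a ∧ B1 ω = false ∧ B2 ω = false} := by
          ext ω
          simp only [Set.mem_preimage, Set.mem_singleton_iff, Prod.ext_iff, hZ1, hZ2,
            Set.mem_setOf_eq, ha1, ha2]
          cases hb1 : B1 ω <;> cases hb2 : B2 ω <;> simp <;> tauto
        rw [hs, hkeyR a false false]
        simp [ha1, ha2]
      · have hs : (fun ω => (X ω, (Z1 ω, Z2 ω))) ⁻¹' {(a, (some a', some a''))}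
            = (∅ : Set Ω) := by
          ext ω
          simp only [Set.mem_preimage, Set.mem_singleton_iff, Prod.ext_iff, hZ1, hZ2,
            Set.mem_empty_iff_false, iff_false]
          cases h1 : B1 ω <;> cases h2 : B2 ω <;> simp
          rintro rfl h1 h2
          exact h ⟨h1.symm, h2.symm⟩
        rw [hs]; simp [h]
  -- entropy of (Z1, Z2)
  have hHZ : entropy (fun ω => (Z1 ω, Z2 ω)) μ
      = negMulLog (q true * q true)
        + ∑ a : α, negMulLog (P a * (q true * q false))
        + (∑ a : α, negMulLog (P a * (q false * q true))
          + ∑ a : α, negMulLog (P a * (q false * q false))) := by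
    unfold entropy measureEntropy
    rw [Fintype.sum_prod_type]
    rw [Fintype.sum_option]
    congr 1
    · rw [Fintype.sum_option]
      congr 1
      · rw [hZval (none, none)]
      · refine Finset.sum_congr rfl fun a _ => ?_
        rw [hZval (none, some a)]
    · rw [← Finset.sum_add_distrib]
      refine Finset.sum_congr rfl fun a _ => ?_
      rw [Fintype.sum_option]
      congr 1
      · rw [hZval (some a, none)]
      · rw [Finset.sum_eq_single a]
        · rw [hZval (some a, some a)]; simp
        · intro a' _ ha'
          rw [hZval (some a, some a')]
          simp [ha']
        · simp
  -- entropy of (X, (Z1, Z2))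
  have hHW : entropy (fun ω => (X ω, (Z1 ω, Z2 ω))) μ
      = ∑ a : α, (negMulLog (P a * (q true * q true))
          + negMulLog (P a * (q true * q false))
          + (negMulLog (P a * (q false * q true))
            + negMulLog (P a * (q false * q false)))) := by
    unfold entropy measureEntropy
    rw [Fintype.sum_prod_type]
    refine Finset.sum_congr rfl fun a _ => ?_
    rw [Fintype.sum_prod_type, Fintype.sum_option]
    congr 1
    · rw [Fintype.sum_option]
      congr 1
      · rw [hWval (a, (none, none))]
      · rw [Finset.sum_eq_single a]
        · rw [hWval (a, (none, some a))]; simp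
        · intro a' _ ha'
          rw [hWval (a, (none, some a'))]; simp [ha']
        · simp
    · rw [Finset.sum_eq_single a]
      · rw [Fintype.sum_option]
        congr 1
        · rw [hWval (a, (some a, none))]; simp
        · rw [Finset.sum_eq_single a]
          · rw [hWval (a, (some a, some a))]; simp
          · intro a' _ ha'
            rw [hWval (a, (some a, some a'))]; simp [ha']
          · simp
      · intro a' _ ha'
        rw [Fintype.sum_option]
        have h1 : ((μ.map (fun ω => (X ω, (Z1 ω, Z2 ω)))) {(a, (some a', none))}).toReal = 0 := by
          rw [hWval (a, (some a', none))]; simp [ha']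
        have h2 : ∀ a'' : α,
            ((μ.map (fun ω => (X ω, (Z1 ω, Z2 ω)))) {(a, (some a', some a''))}).toReal = 0 := by
          intro a''
          rw [hWval (a, (some a', some a''))]; simp [ha']
        simp [h1, h2]
      · simp
  -- conditional entropy computation
  have hcond : condEntropy X (fun ω => (Z1 ω, Z2 ω)) μ = ε ^ 2 * entropy X μ := by
    unfold condEntropy
    rw [hHW, hHZ]
    have hdiff : (∑ a : α, (negMulLog (P a * (q true * q true))
          + negMulLog (P a * (q true * q false))
          + (negMulLog (P a * (q false * q true))
            + negMulLog (P a * (q false * q false)))))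
        - (negMulLog (q true * q true)
          + ∑ a : α, negMulLog (P a * (q true * q false))
          + (∑ a : α, negMulLog (P a * (q false * q true))
            + ∑ a : α, negMulLog (P a * (q false * q false))))
        = (∑ a : α, negMulLog (P a * (q true * q true))) - negMulLog (q true * q true) := by
      simp only [Finset.sum_add_distrib]
      ring
    rw [hdiff]
    have hexp : ∑ a : α, negMulLog (P a * (q true * q true))
        = (q true * q true) * ∑ a : α, negMulLog (P a)
          + (∑ a : α, P a) * negMulLog (q true * q true) := by
      rw [Finset.mul_sum, Finset.sum_mul, ← Finset.sum_add_distrib]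
      refine Finset.sum_congr rfl fun a _ => ?_
      rw [negMulLog_mul]
    rw [hexp, hPsum, hHX]
    have hq : q true = ε := by simp [hqdef]
    rw [hq]
    ring
  have hmut : mutualInfo X (fun ω => (Z1 ω, Z2 ω)) μ = (1 - ε ^ 2) * entropy X μ := by
    have h : mutualInfo X (fun ω => (Z1 ω, Z2 ω)) μ
        = entropy X μ - condEntropy X (fun ω => (Z1 ω, Z2 ω)) μ := by
      unfold mutualInfo condEntropy
      ring
    rw [h, hcond]; ring
  refine ⟨hcond, hmut, fun hhalf => ?_⟩
  rw [hmut, hhalf]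
  norm_num

end WiretapEquiv
end

section
/- Let (Ω, μ) be a probability space, X : Ω → α a measurable random variable into a finite type α with measurable singletons with H[X] > 0, ε ∈ (0,1), and let B1, B2 : Ω → Bool be measurable with μ {ω | B1 ω = true} = μ {ω | B2 ω = true} = ε such that X, B1, B2 are mutually independent; let Z1, Z2 be the corresponding erasures of X. Then I[X : ⟨Z1, Z2⟩] > I[X : Z1], and the secure rate under joint wiretapping is strictly smaller than under single wiretapping: H[X] − I[X : ⟨Z1, Z2⟩] = ε² · H[X] < ε · H[X] = H[X] − I[X : Z1]. -/
open MeasureTheory ProbabilityTheory Real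
open scoped ENNReal

namespace WiretapEquiv

variable {Ω : Type*} [MeasurableSpace Ω]

lemma sum_negMulLog_mul' {α : Type*} [Fintype α] (c : ℝ) (p : α → ℝ)
    (hp : ∑ a, p a = 1) :
    ∑ a : α, Real.negMulLog (c * p a) = Real.negMulLog c + c * ∑ a, Real.negMulLog (p a) := by
  simp only [Real.negMulLog_mul]
  rw [Finset.sum_add_distrib, ← Finset.sum_mul, ← Finset.mul_sum, hp, one_mul]

/-- If `H[X] > 0`, `ε ∈ (0,1)`, and `Z1, Z2` are independent `ε`-erasures
of the same input `X`, then the eavesdropper observing both erasures learns strictly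
more than one observing a single erasure: `I[X : ⟨Z1, Z2⟩] > I[X : Z1]`, and the secure
rate under joint wiretapping is strictly smaller:
`H[X] − I[X : ⟨Z1, Z2⟩] = ε² · H[X] < ε · H[X] = H[X] − I[X : Z1]`. -/
theorem joint_wiretapping_strictly_worse
    {α : Type*} [MeasurableSpace α] [Fintype α] [MeasurableSingletonClass α]
    [MeasurableSpace (Option α)] [MeasurableSingletonClass (Option α)]
    (μ : Measure Ω) [IsProbabilityMeasure μ]
    (X : Ω → α) (hX : Measurable X) (hHX : 0 < entropy X μ)
    (ε : ℝ) (hε : ε ∈ Set.Ioo (0 : ℝ) 1)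
    (B1 B2 : Ω → Bool) (Z1 Z2 : Ω → Option α)
    (hB1 : μ {ω | B1 ω = true} = ENNReal.ofReal ε)
    (hB2 : μ {ω | B2 ω = true} = ENNReal.ofReal ε)
    (hmB1 : Measurable B1) (hmB2 : Measurable B2)
    (hindep : MutuallyIndep μ X B1 B2)
    (hZ1 : ∀ ω, Z1 ω = if B1 ω then none else some (X ω))
    (hZ2 : ∀ ω, Z2 ω = if B2 ω then none else some (X ω)) :
    mutualInfo X (fun ω => (Z1 ω, Z2 ω)) μ > mutualInfo X Z1 μ ∧
      entropy X μ - mutualInfo X (fun ω => (Z1 ω, Z2 ω)) μ = ε ^ 2 * entropy X μ ∧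
      ε ^ 2 * entropy X μ < ε * entropy X μ ∧
      ε * entropy X μ = entropy X μ - mutualInfo X Z1 μ := by
  classical
  obtain ⟨hε0, hε1⟩ := hε
  obtain ⟨hB12, hXB⟩ := hindep
  have hε'0 : (0:ℝ) < 1 - ε := by linarith
  -- measurability
  have hmα : ∀ s : Set α, MeasurableSet s := fun s => s.toFinite.measurableSet
  have hsome : Measurable (fun a : α => (some a : Option α)) := fun s _ => hmα _
  have hmZ1 : Measurable Z1 := by
    have h : Z1 = fun ω => if B1 ω then none else some (X ω) := funext hZ1
    rw [h]
    exact Measurable.ite (hmB1 (by trivial : MeasurableSet {true})) measurable_const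
      (hsome.comp hX)
  have hmZ2 : Measurable Z2 := by
    have h : Z2 = fun ω => if B2 ω then none else some (X ω) := funext hZ2
    rw [h]
    exact Measurable.ite (hmB2 (by trivial : MeasurableSet {true})) measurable_const
      (hsome.comp hX)
  -- basic measure values
  set e : ℝ≥0∞ := ENNReal.ofReal ε with he_def
  set e' : ℝ≥0∞ := ENNReal.ofReal (1 - ε) with he'_def
  have hB1t : μ (B1 ⁻¹' {true}) = e := hB1
  have hB2t : μ (B2 ⁻¹' {true}) = e := hB2
  have hfalse : ∀ (B : Ω → Bool), Measurable B → μ (B ⁻¹' {true}) = e →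
      μ (B ⁻¹' {false}) = e' := by
    intro B hmB hBt
    have h : B ⁻¹' {false} = (B ⁻¹' {true})ᶜ := by
      ext ω; cases h : B ω <;> simp [h]
    rw [h, measure_compl (hmB (by trivial)) (measure_ne_top μ _), hBt, measure_univ,
      he'_def, ENNReal.ofReal_sub 1 hε0.le, ENNReal.ofReal_one]
  have hB1f : μ (B1 ⁻¹' {false}) = e' := hfalse B1 hmB1 hB1t
  have hB2f : μ (B2 ⁻¹' {false}) = e' := hfalse B2 hmB2 hB2t
  set p : α → ℝ≥0∞ := fun a => μ (X ⁻¹' {a}) with hp_def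
  -- independence facts
  have hXB1 : IndepFun X B1 μ := by
    have := hXB.comp measurable_id (measurable_fst : Measurable (Prod.fst : Bool × Bool → Bool))
    exact this
  have hpair : ∀ (a : α) (s : Bool), μ (X ⁻¹' {a} ∩ B1 ⁻¹' {s}) = p a * μ (B1 ⁻¹' {s}) :=
    fun a s => hXB1.measure_inter_preimage_eq_mul _ _ (measurableSet_singleton _)
      (by trivial : MeasurableSet {s})
  have htriple : ∀ (a : α) (s t : Bool),
      μ (X ⁻¹' {a} ∩ B1 ⁻¹' {s} ∩ B2 ⁻¹' {t})
        = p a * μ (B1 ⁻¹' {s}) * μ (B2 ⁻¹' {t}) := by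
    intro a s t
    have h1 : X ⁻¹' {a} ∩ B1 ⁻¹' {s} ∩ B2 ⁻¹' {t}
        = X ⁻¹' {a} ∩ (fun ω => (B1 ω, B2 ω)) ⁻¹' {(s, t)} := by
      ext ω; simp [Set.mem_inter_iff, and_assoc, Prod.ext_iff]
    have h2 : (fun ω => (B1 ω, B2 ω)) ⁻¹' {(s, t)} = B1 ⁻¹' {s} ∩ B2 ⁻¹' {t} := by
      ext ω; simp [Prod.ext_iff]
    rw [h1, hXB.measure_inter_preimage_eq_mul _ _ (measurableSet_singleton _)
      (measurableSet_singleton _), h2,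
      hB12.measure_inter_preimage_eq_mul _ _ (by trivial : MeasurableSet {s})
        (by trivial : MeasurableSet {t}), mul_assoc]
  -- real-valued probabilities
  set f : α → ℝ := fun a => (p a).toReal with hf_def
  have hf1 : ∑ a, f a = 1 := by
    have h := sum_measure_preimage_singleton (f := X) (μ := μ) Finset.univ
      (fun a _ => hX (measurableSet_singleton a))
    simp only [Finset.coe_univ, Set.preimage_univ, measure_univ] at h
    rw [hf_def]
    rw [← ENNReal.toReal_sum (fun a _ => measure_ne_top μ _)] at *
    rw [h]; rfl
  set F : ℝ := ∑ a, Real.negMulLog (f a) with hF_def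
  have hEX : entropy X μ = F := by
    rw [entropy, measureEntropy, hF_def]
    congr 1; ext a
    rw [Measure.map_apply hX (measurableSet_singleton a)]
  -- toReal conversion helpers
  have hte : e.toReal = ε := ENNReal.toReal_ofReal hε0.le
  have hte' : e'.toReal = 1 - ε := ENNReal.toReal_ofReal hε'0.le

  -- pointwise characterization of Z1, Z2
  have hZn1 : ∀ ω, Z1 ω = none ↔ B1 ω = true := by
    intro ω; rw [hZ1 ω]; cases h : B1 ω <;> simp [h]
  have hZs1 : ∀ ω (a : α), Z1 ω = some a ↔ B1 ω = false ∧ X ω = a := by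
    intro ω a; rw [hZ1 ω]; cases h : B1 ω <;> simp [h]
  have hZn2 : ∀ ω, Z2 ω = none ↔ B2 ω = true := by
    intro ω; rw [hZ2 ω]; cases h : B2 ω <;> simp [h]
  have hZs2 : ∀ ω (a : α), Z2 ω = some a ↔ B2 ω = false ∧ X ω = a := by
    intro ω a; rw [hZ2 ω]; cases h : B2 ω <;> simp [h]
  -- values of the distribution of Z1
  have vZ1n : ((μ.map Z1) {(none : Option α)}).toReal = ε := by
    rw [Measure.map_apply hmZ1 (measurableSet_singleton _),
      show Z1 ⁻¹' {none} = B1 ⁻¹' {true} from by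
        ext ω
        simp only [Set.mem_preimage, Set.mem_singleton_iff, hZn1 ω],
      hB1t, hte]
  have vZ1s : ∀ a, ((μ.map Z1) {some a}).toReal = (1 - ε) * f a := by
    intro a
    rw [Measure.map_apply hmZ1 (measurableSet_singleton _),
      show Z1 ⁻¹' {some a} = X ⁻¹' {a} ∩ B1 ⁻¹' {false} from by
        ext ω
        simp only [Set.mem_preimage, Set.mem_singleton_iff, Set.mem_inter_iff, hZs1 ω]
        try tauto
      ,
      hpair a false, hB1f, ENNReal.toReal_mul, hte']
    ring
  -- values of the distribution of (X, Z1)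
  have hmXZ1 : Measurable (fun ω => (X ω, Z1 ω)) := hX.prodMk hmZ1
  have vXZ1n : ∀ a, ((μ.map (fun ω => (X ω, Z1 ω))) {(a, none)}).toReal = ε * f a := by
    intro a
    rw [Measure.map_apply hmXZ1 (measurableSet_singleton _),
      show (fun ω => (X ω, Z1 ω)) ⁻¹' {(a, none)} = X ⁻¹' {a} ∩ B1 ⁻¹' {true} from by
        ext ω
        simp only [Set.mem_preimage, Set.mem_singleton_iff, Set.mem_inter_iff,
          Prod.mk.injEq, hZn1 ω]
        try tauto
      ,
      hpair a true, hB1t, ENNReal.toReal_mul, hte]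
    ring
  have vXZ1s : ∀ a b, ((μ.map (fun ω => (X ω, Z1 ω))) {(a, some b)}).toReal
      = if b = a then (1 - ε) * f a else 0 := by
    intro a b
    by_cases h : b = a
    · subst h
      rw [if_pos rfl, Measure.map_apply hmXZ1 (measurableSet_singleton _),
        show (fun ω => (X ω, Z1 ω)) ⁻¹' {(b, some b)} = X ⁻¹' {b} ∩ B1 ⁻¹' {false} from by
          ext ω
          simp only [Set.mem_preimage, Set.mem_singleton_iff, Set.mem_inter_iff,
            Prod.mk.injEq, hZs1 ω]
          try tauto
        ,
        hpair b false, hB1f, ENNReal.toReal_mul, hte']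
      ring
    · rw [if_neg h, Measure.map_apply hmXZ1 (measurableSet_singleton _),
        show (fun ω => (X ω, Z1 ω)) ⁻¹' {(a, some b)} = ∅ from by
          apply Set.eq_empty_iff_forall_notMem.mpr
          intro ω hω
          simp only [Set.mem_preimage, Set.mem_singleton_iff, Prod.mk.injEq] at hω
          exact h ((((hZs1 ω b).mp hω.2).2).symm.trans hω.1),
        measure_empty]
      rfl
  -- values of the distribution of (Z1, Z2)
  have hmW : Measurable (fun ω => (Z1 ω, Z2 ω)) := hmZ1.prodMk hmZ2
  have vWnn : ((μ.map (fun ω => (Z1 ω, Z2 ω))) {((none : Option α), (none : Option α))}).toReal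
      = ε * ε := by
    rw [Measure.map_apply hmW (measurableSet_singleton _),
      show (fun ω => (Z1 ω, Z2 ω)) ⁻¹' {(none, none)} = B1 ⁻¹' {true} ∩ B2 ⁻¹' {true} from by
        ext ω
        simp only [Set.mem_preimage, Set.mem_singleton_iff, Set.mem_inter_iff,
          Prod.mk.injEq, hZn1 ω, hZn2 ω],
      hB12.measure_inter_preimage_eq_mul _ _ (by trivial : MeasurableSet {true})
        (by trivial : MeasurableSet {true}), hB1t, hB2t, ENNReal.toReal_mul, hte]
  have vWns : ∀ a, ((μ.map (fun ω => (Z1 ω, Z2 ω))) {((none : Option α), some a)}).toReal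
      = (ε * (1 - ε)) * f a := by
    intro a
    rw [Measure.map_apply hmW (measurableSet_singleton _),
      show (fun ω => (Z1 ω, Z2 ω)) ⁻¹' {(none, some a)}
          = X ⁻¹' {a} ∩ B1 ⁻¹' {true} ∩ B2 ⁻¹' {false} from by
        ext ω
        simp only [Set.mem_preimage, Set.mem_singleton_iff, Set.mem_inter_iff,
          Prod.mk.injEq, hZn1 ω, hZs2 ω]
        try tauto
      ,
      htriple a true false, hB1t, hB2f, ENNReal.toReal_mul, ENNReal.toReal_mul, hte, hte']
    ring
  have vWsn : ∀ a, ((μ.map (fun ω => (Z1 ω, Z2 ω))) {(some a, (none : Option α))}).toReal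
      = ((1 - ε) * ε) * f a := by
    intro a
    rw [Measure.map_apply hmW (measurableSet_singleton _),
      show (fun ω => (Z1 ω, Z2 ω)) ⁻¹' {(some a, none)}
          = X ⁻¹' {a} ∩ B1 ⁻¹' {false} ∩ B2 ⁻¹' {true} from by
        ext ω
        simp only [Set.mem_preimage, Set.mem_singleton_iff, Set.mem_inter_iff,
          Prod.mk.injEq, hZn2 ω, hZs1 ω]
        try tauto
      ,
      htriple a false true, hB1f, hB2t, ENNReal.toReal_mul, ENNReal.toReal_mul, hte, hte']
    ring
  have vWss : ∀ a b, ((μ.map (fun ω => (Z1 ω, Z2 ω))) {(some a, some b)}).toReal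
      = if b = a then ((1 - ε) * (1 - ε)) * f a else 0 := by
    intro a b
    by_cases h : b = a
    · subst h
      rw [if_pos rfl, Measure.map_apply hmW (measurableSet_singleton _),
        show (fun ω => (Z1 ω, Z2 ω)) ⁻¹' {(some b, some b)}
            = X ⁻¹' {b} ∩ B1 ⁻¹' {false} ∩ B2 ⁻¹' {false} from by
          ext ω
          simp only [Set.mem_preimage, Set.mem_singleton_iff, Set.mem_inter_iff,
            Prod.mk.injEq, hZs1 ω, hZs2 ω]
          try tauto
        ,
        htriple b false false, hB1f, hB2f, ENNReal.toReal_mul, ENNReal.toReal_mul, hte']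
      ring
    · rw [if_neg h, Measure.map_apply hmW (measurableSet_singleton _),
        show (fun ω => (Z1 ω, Z2 ω)) ⁻¹' {(some a, some b)} = ∅ from by
          apply Set.eq_empty_iff_forall_notMem.mpr
          intro ω hω
          simp only [Set.mem_preimage, Set.mem_singleton_iff, Prod.mk.injEq] at hω
          exact h ((((hZs2 ω b).mp hω.2).2).symm.trans (((hZs1 ω a).mp hω.1).2)),
        measure_empty]
      rfl
  -- values of the distribution of (X, (Z1, Z2))
  have hmV : Measurable (fun ω => (X ω, (Z1 ω, Z2 ω))) := hX.prodMk hmW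
  have vVnn : ∀ a, ((μ.map (fun ω => (X ω, (Z1 ω, Z2 ω)))) {(a, ((none : Option α), (none : Option α)))}).toReal
      = (ε * ε) * f a := by
    intro a
    rw [Measure.map_apply hmV (measurableSet_singleton _),
      show (fun ω => (X ω, (Z1 ω, Z2 ω))) ⁻¹' {(a, (none, none))}
          = X ⁻¹' {a} ∩ B1 ⁻¹' {true} ∩ B2 ⁻¹' {true} from by
        ext ω
        simp only [Set.mem_preimage, Set.mem_singleton_iff, Set.mem_inter_iff,
          Prod.mk.injEq, hZn1 ω, hZn2 ω]
        try tauto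
      ,
      htriple a true true, hB1t, hB2t, ENNReal.toReal_mul, ENNReal.toReal_mul, hte]
    ring
  have vVns : ∀ a b, ((μ.map (fun ω => (X ω, (Z1 ω, Z2 ω)))) {(a, ((none : Option α), some b))}).toReal
      = if b = a then (ε * (1 - ε)) * f a else 0 := by
    intro a b
    by_cases h : b = a
    · subst h
      rw [if_pos rfl, Measure.map_apply hmV (measurableSet_singleton _),
        show (fun ω => (X ω, (Z1 ω, Z2 ω))) ⁻¹' {(b, (none, some b))}
            = X ⁻¹' {b} ∩ B1 ⁻¹' {true} ∩ B2 ⁻¹' {false} from by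
          ext ω
          simp only [Set.mem_preimage, Set.mem_singleton_iff, Set.mem_inter_iff,
            Prod.mk.injEq, hZn1 ω, hZs2 ω]
          try tauto
        ,
        htriple b true false, hB1t, hB2f, ENNReal.toReal_mul, ENNReal.toReal_mul, hte, hte']
      ring
    · rw [if_neg h, Measure.map_apply hmV (measurableSet_singleton _),
        show (fun ω => (X ω, (Z1 ω, Z2 ω))) ⁻¹' {(a, (none, some b))} = ∅ from by
          apply Set.eq_empty_iff_forall_notMem.mpr
          intro ω hω
          simp only [Set.mem_preimage, Set.mem_singleton_iff, Prod.mk.injEq] at hω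
          exact h ((((hZs2 ω b).mp hω.2.2).2).symm.trans hω.1),
        measure_empty]
      rfl
  have vVsn : ∀ a b, ((μ.map (fun ω => (X ω, (Z1 ω, Z2 ω)))) {(a, (some b, (none : Option α)))}).toReal
      = if b = a then ((1 - ε) * ε) * f a else 0 := by
    intro a b
    by_cases h : b = a
    · subst h
      rw [if_pos rfl, Measure.map_apply hmV (measurableSet_singleton _),
        show (fun ω => (X ω, (Z1 ω, Z2 ω))) ⁻¹' {(b, (some b, none))}
            = X ⁻¹' {b} ∩ B1 ⁻¹' {false} ∩ B2 ⁻¹' {true} from by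
          ext ω
          simp only [Set.mem_preimage, Set.mem_singleton_iff, Set.mem_inter_iff,
            Prod.mk.injEq, hZs1 ω, hZn2 ω]
          try tauto
        ,
        htriple b false true, hB1f, hB2t, ENNReal.toReal_mul, ENNReal.toReal_mul, hte, hte']
      ring
    · rw [if_neg h, Measure.map_apply hmV (measurableSet_singleton _),
        show (fun ω => (X ω, (Z1 ω, Z2 ω))) ⁻¹' {(a, (some b, none))} = ∅ from by
          apply Set.eq_empty_iff_forall_notMem.mpr
          intro ω hω
          simp only [Set.mem_preimage, Set.mem_singleton_iff, Prod.mk.injEq] at hω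
          exact h ((((hZs1 ω b).mp hω.2.1).2).symm.trans hω.1),
        measure_empty]
      rfl
  have vVss : ∀ a b c, ((μ.map (fun ω => (X ω, (Z1 ω, Z2 ω)))) {(a, (some b, some c))}).toReal
      = if b = a then (if c = a then ((1 - ε) * (1 - ε)) * f a else 0) else 0 := by
    intro a b c
    by_cases hb : b = a
    · subst hb
      rw [if_pos rfl]
      by_cases hc : c = b
      · subst hc
        rw [if_pos rfl, Measure.map_apply hmV (measurableSet_singleton _),
          show (fun ω => (X ω, (Z1 ω, Z2 ω))) ⁻¹' {(c, (some c, some c))}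
              = X ⁻¹' {c} ∩ B1 ⁻¹' {false} ∩ B2 ⁻¹' {false} from by
            ext ω
            simp only [Set.mem_preimage, Set.mem_singleton_iff, Set.mem_inter_iff,
              Prod.mk.injEq, hZs1 ω, hZs2 ω]
            try tauto
        ,
          htriple c false false, hB1f, hB2f, ENNReal.toReal_mul, ENNReal.toReal_mul, hte']
        ring
      · rw [if_neg hc, Measure.map_apply hmV (measurableSet_singleton _),
          show (fun ω => (X ω, (Z1 ω, Z2 ω))) ⁻¹' {(b, (some b, some c))} = ∅ from by
          apply Set.eq_empty_iff_forall_notMem.mpr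
          intro ω hω
          simp only [Set.mem_preimage, Set.mem_singleton_iff, Prod.mk.injEq] at hω
          exact hc ((((hZs2 ω c).mp hω.2.2).2).symm.trans hω.1),
          measure_empty]
        rfl
    · rw [if_neg hb, Measure.map_apply hmV (measurableSet_singleton _),
        show (fun ω => (X ω, (Z1 ω, Z2 ω))) ⁻¹' {(a, (some b, some c))} = ∅ from by
          apply Set.eq_empty_iff_forall_notMem.mpr
          intro ω hω
          simp only [Set.mem_preimage, Set.mem_singleton_iff, Prod.mk.injEq] at hω
          exact hb ((((hZs1 ω b).mp hω.2.1).2).symm.trans hω.1),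
        measure_empty]
      rfl
  -- entropy computations
  have hsum : ∀ c : ℝ, ∑ a : α, Real.negMulLog (c * f a) = Real.negMulLog c + c * F := by
    intro c
    rw [sum_negMulLog_mul' c f hf1]
  have hss : ∀ (b a : α) (r : ℝ),
      (∑ c : α, if b = a then (if c = a then r else 0) else 0) = if b = a then r else 0 := by
    intro b a r
    by_cases h : b = a <;> simp [h]
  have hEZ1 : entropy Z1 μ
      = Real.negMulLog ε + (Real.negMulLog (1 - ε) + (1 - ε) * F) := by
    rw [entropy, measureEntropy, univ_option, Finset.sum_insertNone]
    simp only [vZ1n, vZ1s, hsum]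
  have hEXZ1 : entropy (fun ω => (X ω, Z1 ω)) μ
      = Real.negMulLog ε + ε * F + (Real.negMulLog (1 - ε) + (1 - ε) * F) := by
    rw [entropy, measureEntropy, Fintype.sum_prod_type]
    simp only [univ_option, Finset.sum_insertNone, vXZ1n, vXZ1s,
      apply_ite Real.negMulLog, Real.negMulLog_zero, Finset.sum_ite_eq',
      Finset.mem_univ, if_true, Finset.sum_add_distrib, hsum]
    try ring
  have hEW : entropy (fun ω => (Z1 ω, Z2 ω)) μ
      = Real.negMulLog (ε * ε)
        + (Real.negMulLog (ε * (1 - ε)) + (ε * (1 - ε)) * F)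
        + ((Real.negMulLog ((1 - ε) * ε) + ((1 - ε) * ε) * F)
          + (Real.negMulLog ((1 - ε) * (1 - ε)) + ((1 - ε) * (1 - ε)) * F)) := by
    rw [entropy, measureEntropy, Fintype.sum_prod_type]
    simp only [univ_option, Finset.sum_insertNone, vWnn, vWns, vWsn, vWss,
      apply_ite Real.negMulLog, Real.negMulLog_zero, Finset.sum_ite_eq',
      Finset.mem_univ, if_true, Finset.sum_add_distrib, hsum]
    ring
  have hEV : entropy (fun ω => (X ω, (Z1 ω, Z2 ω))) μ
      = Real.negMulLog (ε * ε) + (ε * ε) * F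
        + (Real.negMulLog (ε * (1 - ε)) + (ε * (1 - ε)) * F)
        + ((Real.negMulLog ((1 - ε) * ε) + ((1 - ε) * ε) * F)
          + (Real.negMulLog ((1 - ε) * (1 - ε)) + ((1 - ε) * (1 - ε)) * F)) := by
    rw [entropy, measureEntropy, Fintype.sum_prod_type]
    simp only [Fintype.sum_prod_type, univ_option, Finset.sum_insertNone,
      vVnn, vVns, vVsn, vVss, apply_ite Real.negMulLog, Real.negMulLog_zero, hss,
      Finset.sum_ite_eq', Finset.mem_univ, if_true, Finset.sum_add_distrib, hsum]
    ring
  -- conclusion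
  have key1 : entropy X μ - mutualInfo X Z1 μ = ε * F := by
    rw [mutualInfo, hEX, hEZ1, hEXZ1]; ring
  have key2 : entropy X μ - mutualInfo X (fun ω => (Z1 ω, Z2 ω)) μ = ε ^ 2 * F := by
    rw [mutualInfo, hEX, hEW, hEV]; ring
  have hF0 : 0 < F := hEX ▸ hHX
  have hlt : ε ^ 2 * F < ε * F := by nlinarith [mul_pos (mul_pos hε0 hε'0) hF0]
  refine ⟨by linarith, by rw [key2, hEX], by rw [hEX]; exact hlt, by rw [hEX] at key1 ⊢; linarith⟩



end WiretapEquiv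
end

section
/- Let (Ω, μ) and (Ω', μ') be probability spaces, let 𝒳 and 𝒴 be finite types with measurable singletons satisfying 2 ≤ card 𝒳 and 2 ≤ card 𝒴, and let X : Ω → 𝒳, Y : Ω → 𝒴, X' : Ω' → 𝒳, Y' : Ω' → 𝒴 be measurable random variables. Set δ := ∑_{(x,y) ∈ 𝒳 × 𝒴} |μ {ω | X ω = x ∧ Y ω = y}.toReal − μ' {ω | X' ω = x ∧ Y' ω = y}.toReal| and assume 0 < δ ≤ 1/2. Then |I[X : Y ; μ] − I[X' : Y' ; μ']| ≤ 3 · δ · log((card 𝒳 · card 𝒴) / δ). -/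
/-!
With `η = negMulLog`, concavity makes the increments `η (x + t) - η x` decrease in `x`, so they
lie between `η 1 - η (1 - t) = -η (1 - t)` and `η t - η 0 = η t`; as `η (1 - t) ≤ η t` for
`t ≤ 1/2`, this gives `|η x - η y| ≤ η |x - y|` for `x, y ∈ [0, 1]` with `|x - y| ≤ 1/2`.
Summing over the `n` atoms and applying Jensen bounds the difference of entropies by
`n η (δ / n) = δ log (n / δ)`, using that `η` increases on `[0, e⁻¹] ∋ δ / n`. Marginals are
no farther apart in `ℓ¹` than the joint laws, so each of the three entropies in
`I[X : Y] = H[X] + H[Y] - H[X, Y]` moves by at most `δ log (|𝒳| |𝒴| / δ)`.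
-/

open MeasureTheory ProbabilityTheory Real

theorem ConcaveOn.map_add_sub_map_le_of_le {s : Set ℝ} {f : ℝ → ℝ} (hf : ConcaveOn ℝ s f)
    {a b t : ℝ} (ha : a ∈ s) (hbt : b + t ∈ s) (hab : a ≤ b) (ht : 0 ≤ t) :
    f (b + t) - f b ≤ f (a + t) - f a := by
  rcases (add_nonneg (sub_nonneg.2 hab) ht).eq_or_lt with hd | hd
  · obtain rfl : b = a := by linarith
    obtain rfl : t = 0 := by linarith
    rfl
  -- `b` and `a + t` are the two convex combinations of `a` and `b + t` with weights
  -- `t / d` and `(b - a) / d`, where `d = b - a + t`.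
  set d := b - a + t
  have hw₁ : 0 ≤ t / d := div_nonneg ht hd.le
  have hw₂ : 0 ≤ (b - a) / d := div_nonneg (sub_nonneg.2 hab) hd.le
  have hsum : t / d + (b - a) / d = 1 := by field_simp; ring
  have hb := hf.2 ha hbt hw₁ hw₂ hsum
  have hat := hf.2 ha hbt hw₂ hw₁ (by rw [add_comm, hsum])
  simp only [smul_eq_mul] at hb hat
  rw [show t / d * a + (b - a) / d * (b + t) = b by field_simp; ring] at hb
  rw [show (b - a) / d * a + t / d * (b + t) = a + t by field_simp; ring] at hat
  linear_combination hb + hat - (f a + f (b + t)) * hsum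

namespace Real

open Set

lemma negMulLog_add_le {x y : ℝ} (hx : 0 ≤ x) (hy : 0 ≤ y) :
    negMulLog (x + y) ≤ negMulLog x + negMulLog y := by
  have := concaveOn_negMulLog.map_add_sub_map_le_of_le (a := 0) (mem_Ici.2 le_rfl)
    (mem_Ici.2 (add_nonneg hx hy)) hx hy
  simp only [zero_add, negMulLog_zero, sub_zero] at this
  linarith

lemma negMulLog_sub_negMulLog_add_le {x t : ℝ} (hx : 0 ≤ x) (ht : 0 ≤ t) (hxt : x + t ≤ 1) :
    negMulLog x - negMulLog (x + t) ≤ negMulLog (1 - t) := by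
  have := concaveOn_negMulLog.map_add_sub_map_le_of_le (b := 1 - t) (mem_Ici.2 hx)
    (mem_Ici.2 (by linarith)) (by linarith) ht
  simp only [sub_add_cancel, negMulLog_one, zero_sub] at this
  linarith

lemma negMulLog_one_sub_le {t : ℝ} (ht₀ : 0 ≤ t) (ht : t ≤ 1 / 2) :
    negMulLog (1 - t) ≤ negMulLog t := by
  set φ : ℝ → ℝ := fun s ↦ negMulLog s - negMulLog (1 - s)
  have hφ' : ∀ s ∈ Ioo (0 : ℝ) (1 / 2), HasDerivAt φ (-log (s * (1 - s)) - 2) s := by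
    intro s ⟨hs₀, hs⟩
    have h := (hasDerivAt_negMulLog hs₀.ne').sub
      ((hasDerivAt_negMulLog (x := 1 - s) (by linarith)).comp s ((hasDerivAt_id s).const_sub 1))
    exact h.congr_deriv (by rw [log_mul hs₀.ne' (by linarith)]; ring)
  -- `φ'' = 1 / (1 - s) - 1 / s ≤ 0` on `(0, 1/2)`, and `φ` vanishes at both ends.
  have hφ : ConcaveOn ℝ (Icc 0 (1 / 2)) φ := by
    refine AntitoneOn.concaveOn_of_deriv (convex_Icc _ _) (by fun_prop) ?_ ?_ <;>
      rw [interior_Icc]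
    · exact fun s hs ↦ (hφ' s hs).differentiableAt.differentiableWithinAt
    · intro a ha b hb hab
      rw [(hφ' a ha).deriv, (hφ' b hb).deriv]
      have : log (a * (1 - a)) ≤ log (b * (1 - b)) :=
        log_le_log (mul_pos ha.1 (by linarith [ha.2])) (by nlinarith [ha.2, hb.2])
      linarith
  have := hφ.min_le_of_mem_Icc (left_mem_Icc.2 (by norm_num)) (right_mem_Icc.2 (by norm_num))
    ⟨ht₀, ht⟩
  norm_num [φ] at this
  linarith

lemma abs_negMulLog_sub_negMulLog_le {x y : ℝ} (hx : 0 ≤ x) (hy : 0 ≤ y) (hx₁ : x ≤ 1)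
    (hy₁ : y ≤ 1) (hxy : |x - y| ≤ 1 / 2) :
    |negMulLog x - negMulLog y| ≤ negMulLog |x - y| := by
  wlog hyx : y ≤ x generalizing x y
  · rw [abs_sub_comm, abs_sub_comm x] at *
    exact this hy hx hy₁ hx₁ hxy (le_of_not_ge hyx)
  obtain ⟨t, ht, rfl⟩ : ∃ t, 0 ≤ t ∧ x = y + t := ⟨x - y, by linarith, by ring⟩
  rw [add_sub_cancel_left, abs_of_nonneg ht] at hxy ⊢
  rw [abs_le]
  constructor
  · linarith [negMulLog_sub_negMulLog_add_le hy ht hx₁, negMulLog_one_sub_le ht hxy]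
  · linarith [negMulLog_add_le hy ht]

lemma monotoneOn_negMulLog : MonotoneOn negMulLog (Icc 0 (exp (-1))) := by
  refine monotoneOn_of_deriv_nonneg (convex_Icc _ _) continuous_negMulLog.continuousOn ?_ ?_ <;>
    rw [interior_Icc]
  · exact fun x hx ↦ (differentiableAt_negMulLog_iff.2 hx.1.ne').differentiableWithinAt
  · intro x hx
    rw [deriv_negMulLog hx.1.ne']
    linarith [(log_le_log hx.1 hx.2.le).trans_eq (log_exp (-1))]

lemma sum_negMulLog_le_card_mul {ι : Type*} [Fintype ι] [Nonempty ι] (t : ι → ℝ)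
    (ht : ∀ i, 0 ≤ t i) :
    ∑ i, negMulLog (t i) ≤ Fintype.card ι * negMulLog ((∑ i, t i) / Fintype.card ι) := by
  have hn : (0 : ℝ) < Fintype.card ι := Nat.cast_pos.2 Fintype.card_pos
  have := concaveOn_negMulLog.le_map_sum (t := Finset.univ) (w := fun _ ↦ (Fintype.card ι : ℝ)⁻¹)
    (p := t) (fun _ _ ↦ by positivity) (by simp [hn.ne']) (fun i _ ↦ ht i)
  simp only [smul_eq_mul, ← Finset.mul_sum] at this
  calc ∑ i, negMulLog (t i)
      = Fintype.card ι * ((Fintype.card ι : ℝ)⁻¹ * ∑ i, negMulLog (t i)) := by field_simp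
    _ ≤ _ := by rw [div_eq_inv_mul]; gcongr

end Real

namespace WiretapEquiv

variable {Ω : Type*} [MeasurableSpace Ω]

section Finite

variable {α β : Type*} [MeasurableSpace α] [Fintype α] [MeasurableSpace β]

-- Twice the total variation distance when `ν` and `ν'` are probability measures.
noncomputable def l1Dist (ν ν' : Measure α) : ℝ :=
  ∑ a, |(ν {a}).toReal - (ν' {a}).toReal|

theorem abs_measureEntropy_sub_le (ν ν' : Measure α) [IsProbabilityMeasure ν]
    [IsProbabilityMeasure ν'] (hα : 2 ≤ Fintype.card α) {δ : ℝ} (hνν' : l1Dist ν ν' ≤ δ)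
    (hδ : 0 < δ) (hδ₂ : δ ≤ 1 / 2) :
    |measureEntropy ν - measureEntropy ν'| ≤ δ * log (Fintype.card α / δ) := by
  have : Nonempty α := Fintype.card_pos_iff.1 (by omega)
  have hn : (2 : ℝ) ≤ Fintype.card α := by exact_mod_cast hα
  have hνν'₀ : 0 ≤ l1Dist ν ν' := Finset.sum_nonneg fun _ _ ↦ abs_nonneg _
  set d : α → ℝ := fun a ↦ |(ν {a}).toReal - (ν' {a}).toReal|
  have hd : ∀ a, d a ≤ 1 / 2 := fun a ↦
    ((Finset.single_le_sum (fun b _ ↦ abs_nonneg _) (Finset.mem_univ a)).trans hνν').trans hδ₂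
  have hexp : ∀ {s}, s ≤ δ → s / Fintype.card α ≤ exp (-1) := fun hs ↦ by
    rw [div_le_iff₀ (by positivity)]
    nlinarith [exp_neg_one_gt_d9]
  calc |measureEntropy ν - measureEntropy ν'|
      ≤ ∑ a, |negMulLog (ν {a}).toReal - negMulLog (ν' {a}).toReal| := by
        rw [measureEntropy, measureEntropy, ← Finset.sum_sub_distrib]
        exact Finset.abs_sum_le_sum_abs _ _
    _ ≤ ∑ a, negMulLog (d a) := Finset.sum_le_sum fun a _ ↦
        abs_negMulLog_sub_negMulLog_le ENNReal.toReal_nonneg ENNReal.toReal_nonneg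
          measureReal_le_one measureReal_le_one (hd a)
    _ ≤ Fintype.card α * negMulLog (l1Dist ν ν' / Fintype.card α) :=
        sum_negMulLog_le_card_mul d fun _ ↦ abs_nonneg _
    _ ≤ Fintype.card α * negMulLog (δ / Fintype.card α) := by
        gcongr
        refine monotoneOn_negMulLog ⟨by positivity, hexp hνν'⟩ ⟨by positivity, hexp le_rfl⟩
          (by gcongr)
    _ = δ * log (Fintype.card α / δ) := by
        rw [negMulLog, ← inv_div, log_inv]
        field_simp

variable [MeasurableSingletonClass α] [MeasurableSingletonClass β]

lemma toReal_map_apply_singleton [DecidableEq β] (ν : Measure α) [IsFiniteMeasure ν] (f : α → β)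
    (b : β) : ((ν.map f) {b}).toReal = ∑ a with f a = b, (ν {a}).toReal := by
  rw [Measure.map_apply .of_discrete (measurableSet_singleton b),
    ← ENNReal.toReal_sum fun _ _ ↦ measure_ne_top _ _, sum_measure_singleton]
  congr 2
  ext a
  simp

lemma l1Dist_map_le [Fintype β] (ν ν' : Measure α) [IsFiniteMeasure ν] [IsFiniteMeasure ν']
    (f : α → β) : l1Dist (ν.map f) (ν'.map f) ≤ l1Dist ν ν' := by
  classical
  calc l1Dist (ν.map f) (ν'.map f)
      = ∑ b, |∑ a with f a = b, ((ν {a}).toReal - (ν' {a}).toReal)| := by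
        simp only [l1Dist, toReal_map_apply_singleton, Finset.sum_sub_distrib]
    _ ≤ ∑ b, ∑ a with f a = b, |(ν {a}).toReal - (ν' {a}).toReal| :=
        Finset.sum_le_sum fun b _ ↦ Finset.abs_sum_le_sum_abs _ _
    _ = l1Dist ν ν' := Finset.sum_fiberwise _ _ _

theorem abs_measureEntropy_map_sub_le [Fintype β] (ν ν' : Measure α) [IsProbabilityMeasure ν]
    [IsProbabilityMeasure ν'] (f : α → β) (hβ : 2 ≤ Fintype.card β) {δ : ℝ}
    (hνν' : l1Dist ν ν' ≤ δ) (hδ : 0 < δ) (hδ₂ : δ ≤ 1 / 2) :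
    |measureEntropy (ν.map f) - measureEntropy (ν'.map f)| ≤ δ * log (Fintype.card β / δ) := by
  have := Measure.isProbabilityMeasure_map (μ := ν) (f := f) Measurable.of_discrete.aemeasurable
  have := Measure.isProbabilityMeasure_map (μ := ν') (f := f) Measurable.of_discrete.aemeasurable
  exact abs_measureEntropy_sub_le _ _ hβ ((l1Dist_map_le ν ν' f).trans hνν') hδ hδ₂

end Finite

lemma map_prodMk_apply_singleton {α β : Type*} [MeasurableSpace α] [MeasurableSingletonClass α]
    [MeasurableSpace β] [MeasurableSingletonClass β] (μ : Measure Ω) {X : Ω → α} {Y : Ω → β}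
    (hX : Measurable X) (hY : Measurable Y) (p : α × β) :
    μ.map (fun ω ↦ (X ω, Y ω)) {p} = μ {ω | X ω = p.1 ∧ Y ω = p.2} := by
  rw [Measure.map_apply (hX.prodMk hY) (measurableSet_singleton p)]
  congr 1
  ext ω
  simp [Prod.ext_iff]

lemma abs_mutualInfo_sub_le {Ω' α β : Type*} [MeasurableSpace Ω'] [MeasurableSpace α] [Fintype α]
    [MeasurableSpace β] [Fintype β] (μ : Measure Ω) (μ' : Measure Ω') (X : Ω → α) (Y : Ω → β)
    (X' : Ω' → α) (Y' : Ω' → β) :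
    |mutualInfo X Y μ - mutualInfo X' Y' μ'| ≤ |entropy X μ - entropy X' μ'| +
      |entropy Y μ - entropy Y' μ'| +
      |entropy (fun ω ↦ (X ω, Y ω)) μ - entropy (fun ω ↦ (X' ω, Y' ω)) μ'| := by
  set H := entropy (fun ω ↦ (X ω, Y ω)) μ
  set H' := entropy (fun ω ↦ (X' ω, Y' ω)) μ'
  rw [mutualInfo, mutualInfo, abs_sub_comm H, show entropy X μ + entropy Y μ - H -
    (entropy X' μ' + entropy Y' μ' - H') =
      (entropy X μ - entropy X' μ') + (entropy Y μ - entropy Y' μ') + (H' - H) by ring]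
  exact abs_add_three _ _ _

/-- Continuity of mutual information. If the joint distributions of
`(X, Y)` under `μ` and of `(X', Y')` under `μ'` are at `ℓ¹` distance `δ` with
`0 < δ ≤ 1/2`, and `card 𝒳, card 𝒴 ≥ 2`, then
`|I[X : Y ; μ] − I[X' : Y' ; μ']| ≤ 3 δ log (card 𝒳 · card 𝒴 / δ)`. -/
theorem mutualInfo_continuity
    {Ω' : Type*} [MeasurableSpace Ω']
    {𝒳 𝒴 : Type*}
    [MeasurableSpace 𝒳] [Fintype 𝒳] [MeasurableSingletonClass 𝒳]
    [MeasurableSpace 𝒴] [Fintype 𝒴] [MeasurableSingletonClass 𝒴]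
    (hcard𝒳 : 2 ≤ Fintype.card 𝒳) (hcard𝒴 : 2 ≤ Fintype.card 𝒴)
    (μ : Measure Ω) [IsProbabilityMeasure μ]
    (μ' : Measure Ω') [IsProbabilityMeasure μ']
    (X : Ω → 𝒳) (Y : Ω → 𝒴) (X' : Ω' → 𝒳) (Y' : Ω' → 𝒴)
    (hX : Measurable X) (hY : Measurable Y) (hX' : Measurable X') (hY' : Measurable Y')
    (δ : ℝ)
    (hδdef : δ = ∑ p : 𝒳 × 𝒴,
      |(μ {ω | X ω = p.1 ∧ Y ω = p.2}).toReal - (μ' {ω | X' ω = p.1 ∧ Y' ω = p.2}).toReal|)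
    (hδpos : 0 < δ) (hδhalf : δ ≤ 1 / 2) :
    |mutualInfo X Y μ - mutualInfo X' Y' μ'| ≤
      3 * δ * Real.log ((Fintype.card 𝒳 * Fintype.card 𝒴 : ℝ) / δ) := by
  have := Measure.isProbabilityMeasure_map (hX.prodMk hY).aemeasurable (μ := μ)
  have := Measure.isProbabilityMeasure_map (hX'.prodMk hY').aemeasurable (μ := μ')
  have hP : l1Dist (μ.map fun ω ↦ (X ω, Y ω)) (μ'.map fun ω ↦ (X' ω, Y' ω)) ≤ δ := by
    simp only [l1Dist, map_prodMk_apply_singleton _ hX hY, map_prodMk_apply_singleton _ hX' hY',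
      hδdef, le_rfl]
  have hlog : ∀ {m : ℕ}, 0 < m → m ≤ Fintype.card 𝒳 * Fintype.card 𝒴 →
      δ * log (m / δ) ≤ δ * log ((Fintype.card 𝒳 * Fintype.card 𝒴 : ℝ) / δ) := fun hm hmn ↦ by
    gcongr
    exact_mod_cast hmn
  have hjoint : |entropy (fun ω ↦ (X ω, Y ω)) μ - entropy (fun ω ↦ (X' ω, Y' ω)) μ'| ≤
      δ * log ((Fintype.card 𝒳 * Fintype.card 𝒴 : ℝ) / δ) := by
    have hcard : 2 ≤ Fintype.card (𝒳 × 𝒴) := Fintype.card_prod 𝒳 𝒴 ▸ by nlinarith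
    exact (abs_measureEntropy_sub_le _ _ hcard hP hδpos hδhalf).trans
      (hlog (by omega) (Fintype.card_prod 𝒳 𝒴).le)
  have hfst : |entropy X μ - entropy X' μ'| ≤
      δ * log ((Fintype.card 𝒳 * Fintype.card 𝒴 : ℝ) / δ) := by
    rw [entropy, entropy, ← Measure.fst_map_prodMk hY, ← Measure.fst_map_prodMk hY']
    exact (abs_measureEntropy_map_sub_le _ _ Prod.fst hcard𝒳 hP hδpos hδhalf).trans
      (hlog (by omega) (Nat.le_mul_of_pos_right _ (by omega)))
  have hsnd : |entropy Y μ - entropy Y' μ'| ≤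
      δ * log ((Fintype.card 𝒳 * Fintype.card 𝒴 : ℝ) / δ) := by
    rw [entropy, entropy, ← Measure.snd_map_prodMk hX, ← Measure.snd_map_prodMk hX']
    exact (abs_measureEntropy_map_sub_le _ _ Prod.snd hcard𝒴 hP hδpos hδhalf).trans
      (hlog (by omega) (Nat.le_mul_of_pos_left _ (by omega)))
  calc |mutualInfo X Y μ - mutualInfo X' Y' μ'|
      ≤ _ := abs_mutualInfo_sub_le μ μ' X Y X' Y'
    _ ≤ _ := add_le_add_three hfst hsnd hjoint
    _ = _ := by ring

end WiretapEquiv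
end

section
/- There exist three linear maps φ1, φ2, φ3 : (ZMod 2)³ → ZMod 2 that are linearly independent in the dual space, such that: (a) there is a function ψ : (ZMod 2)³ → ZMod 2 with ψ(φ1 v, φ2 v, φ3 v) = v 0 (the first coordinate of v) for all v ∈ (ZMod 2)³; and (b) for every pair of distinct indices i ≠ j in {1,2,3} and every fixed w ∈ ZMod 2, the map (t5, t6) ↦ (φi (w, t5, t6), φj (w, t5, t6)) from (ZMod 2)² to (ZMod 2)² is injective. (For example, φ1(w,t5,t6) = w + t5, φ2(w,t5,t6) = w + t6, φ3(w,t5,t6) = w + t5 + t6 works.) -/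
/-- Decodability in the `A`-enhanced network of Figure 8. There exist
three linearly independent linear functionals `Φ 0, Φ 1, Φ 2` on `(ZMod 2)³`
(triples `(w, t5, t6)`) such that: (a) the receiver can decode the first coordinate
`w = W4` from the three values `(Φ 0 v, Φ 1 v, Φ 2 v)`; and (b) for any two distinct
functionals and any fixed `w`, the map `(t5, t6) ↦ (Φ i (w, t5, t6), Φ j (w, t5, t6))`
is injective, i.e., knowing `w` and any two of the three combinations determines the
keys `(T5, T6)`. -/
theorem enhanced_network_code_decodability :
    ∃ Φ : Fin 3 → ((Fin 3 → ZMod 2) →ₗ[ZMod 2] ZMod 2),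
      LinearIndependent (ZMod 2) Φ ∧
      (∃ ψ : ZMod 2 × ZMod 2 × ZMod 2 → ZMod 2,
        ∀ v : Fin 3 → ZMod 2, ψ (Φ 0 v, Φ 1 v, Φ 2 v) = v 0) ∧
      (∀ i j : Fin 3, i ≠ j → ∀ w : ZMod 2,
        Function.Injective
          (fun t : ZMod 2 × ZMod 2 => (Φ i ![w, t.1, t.2], Φ j ![w, t.1, t.2]))) := by
  set P : Fin 3 → ((Fin 3 → ZMod 2) →ₗ[ZMod 2] ZMod 2) :=
    fun k => LinearMap.proj k with hP
  refine ⟨![P 0 + P 1, P 0 + P 2, P 0 + P 1 + P 2], ?_, ?_, ?_⟩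
  · rw [Fintype.linearIndependent_iff]
    intro g hg i
    have h0 := congrFun (congrArg (fun f : (Fin 3 → ZMod 2) →ₗ[ZMod 2] ZMod 2 =>
      (f : (Fin 3 → ZMod 2) → ZMod 2)) hg) ![1, 0, 0]
    have h1 := congrFun (congrArg (fun f : (Fin 3 → ZMod 2) →ₗ[ZMod 2] ZMod 2 =>
      (f : (Fin 3 → ZMod 2) → ZMod 2)) hg) ![0, 1, 0]
    have h2 := congrFun (congrArg (fun f : (Fin 3 → ZMod 2) →ₗ[ZMod 2] ZMod 2 =>
      (f : (Fin 3 → ZMod 2) → ZMod 2)) hg) ![0, 0, 1]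
    simp [hP, Fin.sum_univ_three, LinearMap.proj_apply] at h0 h1 h2
    have key : ∀ a b c : ZMod 2, a + b + c = 0 → a + c = 0 → b + c = 0 →
        a = 0 ∧ b = 0 ∧ c = 0 := by decide
    obtain ⟨ha, hb, hc⟩ := key _ _ _ h0 h1 h2
    fin_cases i <;> simpa using ‹_›
  · refine ⟨fun p => p.1 + p.2.1 + p.2.2, fun v => ?_⟩
    simp [hP, LinearMap.proj_apply]
    ring_nf
    rw [show (3 : ZMod 2) = 1 by decide, show (2 : ZMod 2) = 0 by decide]
    ring
  · intro i j hij w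
    rintro ⟨a, b⟩ ⟨c, d⟩ h
    fin_cases i <;> fin_cases j <;> simp_all [hP, Prod.ext_iff, LinearMap.proj_apply] <;>
      (revert h; revert w a b c d; decide)
end
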